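/- arXiv:1002.1292 — 4 statements merged into one kernel-verified Lean document; each statement's English description precedes it below -/
import Mathlib

section
/- (Correctness of Rule 2) Let G be a bipartite graph and let v, w be two distinct vertices in the same bipartition class with identical neighborhoods. Then the minimum biclique edge cover numbers of G and G − v (the graph with v and its incident edges removed) are equal. -/
/-- `(A, B)` is a biclique of the bipartite graph with edge relation `E`. -/
def IsBiclique {α β : Type*} (E : α → β → Prop) (A : Set α) (B : Set β) : Prop :=
  ∀ a ∈ A, ∀ b ∈ B, E a b

/-- The bipartite graph `E` has a biclique edge cover of size `k`. -/
def HasBicCover {α β : Type*} (E : α → β → Prop) (k : ℕ) : Prop :=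
  ∃ A : Fin k → Set α, ∃ B : Fin k → Set β,
    (∀ ℓ, IsBiclique E (A ℓ) (B ℓ)) ∧ ∀ a b, E a b → ∃ ℓ, a ∈ A ℓ ∧ b ∈ B ℓ

/-- Correctness of Rule 2: if `v ≠ w` lie in the same class and have identical
    neighborhoods, then `G` has a biclique edge cover of size `k` iff `G − v` does;
    in particular the minimum biclique edge cover numbers coincide. -/
theorem rule2_correct {α β : Type*} (E : α → β → Prop) (v w : α) (hvw : v ≠ w)
    (hnbr : ∀ b, E v b ↔ E w b) :
    (∀ k, HasBicCover E k ↔ HasBicCover (fun a b => a ≠ v ∧ E a b) k) ∧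
    sInf {k | HasBicCover E k} = sInf {k | HasBicCover (fun a b => a ≠ v ∧ E a b) k} := by
  have main : ∀ k, HasBicCover E k ↔ HasBicCover (fun a b => a ≠ v ∧ E a b) k := by
    intro k
    constructor
    · rintro ⟨A, B, hbic, hcov⟩
      refine ⟨fun ℓ => A ℓ \ {v}, B, ?_, ?_⟩
      · intro ℓ a ha b hb
        exact ⟨ha.2, hbic ℓ a ha.1 b hb⟩
      · rintro a b ⟨hav, hE⟩
        obtain ⟨ℓ, h1, h2⟩ := hcov a b hE
        exact ⟨ℓ, ⟨h1, hav⟩, h2⟩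
    · rintro ⟨A, B, hbic, hcov⟩
      refine ⟨fun ℓ => A ℓ ∪ {a | a = v ∧ w ∈ A ℓ}, B, ?_, ?_⟩
      · intro ℓ a ha b hb
        rcases ha with ha | ⟨rfl, hw⟩
        · exact (hbic ℓ a ha b hb).2
        · exact (hnbr b).2 (hbic ℓ w hw b hb).2
      · intro a b hE
        by_cases hav : a = v
        · subst hav
          obtain ⟨ℓ, h1, h2⟩ := hcov w b ⟨hvw.symm, (hnbr b).1 hE⟩
          exact ⟨ℓ, Or.inr ⟨rfl, h1⟩, h2⟩
        · obtain ⟨ℓ, h1, h2⟩ := hcov a b ⟨hav, hE⟩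
          exact ⟨ℓ, Or.inl h1, h2⟩
  refine ⟨main, ?_⟩
  congr 1
  ext k
  exact main k
end

section
/- (Correctness of Rule 3) Let G be a bipartite graph, and let v be a vertex with exactly one neighbor u. Then G has a biclique edge cover of size k if and only if the graph G − {u, v} (remove both u and v and all their incident edges) has a biclique edge cover of size k − 1, assuming k ≥ 1. -/
/-!
The biclique of any cover that contains the edge `uv` has left side `{u}`, because `u` is the
only neighbour of `v`. Dropping that biclique and deleting `u` and `v` from the others covers
`G − {u, v}`. Conversely, a cover of `G − {u, v}` together with the star of `u` covers `G`:
every edge missed by the former is incident to `u`, since all edges at `v` are.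
-/

namespace HasBicCover

variable {α β : Type*} {E : α → β → Prop} {k : ℕ}

theorem restrict (h : HasBicCover E k) (p : α → Prop) (q : β → Prop) :
    HasBicCover (fun a b => p a ∧ q b ∧ E a b) k := by
  obtain ⟨A, B, hbic, hcov⟩ := h
  refine ⟨fun ℓ => A ℓ ∩ {a | p a}, fun ℓ => B ℓ ∩ {b | q b}, ?_, ?_⟩
  · rintro ℓ a ⟨ha, hpa⟩ b ⟨hb, hqb⟩
    exact ⟨hpa, hqb, hbic ℓ a ha b hb⟩
  · rintro a b ⟨hpa, hqb, hab⟩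
    obtain ⟨ℓ, ha, hb⟩ := hcov a b hab
    exact ⟨ℓ, ⟨ha, hpa⟩, ⟨hb, hqb⟩⟩

theorem erase_leaf_neighbor {u : α} {v : β} (h : HasBicCover E (k + 1)) (huv : E u v)
    (huniq : ∀ a, E a v → a = u) : HasBicCover (fun a b => a ≠ u ∧ E a b) k := by
  obtain ⟨A, B, hbic, hcov⟩ := h
  obtain ⟨ℓ₀, -, hv⟩ := hcov u v huv
  have hA₀ : ∀ a ∈ A ℓ₀, a = u := fun a ha => huniq a (hbic ℓ₀ a ha v hv)
  refine ⟨fun i => A (ℓ₀.succAbove i) \ {u}, fun i => B (ℓ₀.succAbove i), ?_, ?_⟩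
  · rintro i a ⟨ha, hau⟩ b hb
    exact ⟨hau, hbic _ a ha b hb⟩
  · rintro a b ⟨hau, hab⟩
    obtain ⟨ℓ, ha, hb⟩ := hcov a b hab
    obtain ⟨i, rfl⟩ := Fin.exists_succAbove_eq fun h : ℓ = ℓ₀ => hau (hA₀ a (h ▸ ha))
    exact ⟨i, ⟨ha, hau⟩, hb⟩

theorem succ_of_star {E' : α → β → Prop} (u : α) (h : HasBicCover E' k)
    (hle : ∀ a b, E' a b → E a b) (hcov : ∀ a b, E a b → a = u ∨ E' a b) :
    HasBicCover E (k + 1) := by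
  obtain ⟨A, B, hbic, hcov'⟩ := h
  refine ⟨Fin.cons {u} A, Fin.cons {b | E u b} B, Fin.forall_fin_succ.2 ⟨?_, ?_⟩, ?_⟩
  · rintro a rfl b hb
    exact hb
  · exact fun i a ha b hb => hle a b (hbic i a ha b hb)
  · intro a b hab
    rcases hcov a b hab with rfl | hab'
    · exact ⟨0, rfl, hab⟩
    · obtain ⟨i, hi⟩ := hcov' a b hab'
      exact ⟨i.succ, hi⟩

end HasBicCover

/-- Correctness of Rule 3: if `v` (in the second class) has exactly one neighbor `u`,
    then for `k ≥ 1`, `G` has a biclique edge cover of size `k` iff `G − {u, v}` has one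
    of size `k − 1`. -/
theorem rule3_correct {α β : Type*} (E : α → β → Prop) (u : α) (v : β)
    (huv : E u v) (huniq : ∀ a, E a v → a = u) (k : ℕ) (hk : 1 ≤ k) :
    HasBicCover E k ↔ HasBicCover (fun a b => a ≠ u ∧ b ≠ v ∧ E a b) (k - 1) := by
  obtain ⟨n, rfl⟩ : ∃ n, k = n + 1 := ⟨k - 1, by omega⟩
  rw [Nat.add_sub_cancel]
  constructor
  · intro h
    simpa only [true_and, and_left_comm (b := _ ≠ v)] using
      (h.erase_leaf_neighbor huv huniq).restrict (fun _ => True) (· ≠ v)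
  · intro h
    refine h.succ_of_star u (fun a b hab => hab.2.2) fun a b hab => ?_
    by_cases hau : a = u
    · exact Or.inl hau
    · exact Or.inr ⟨hau, fun hbv => hau (huniq a (hbv ▸ hab)), hab⟩
end

section
/- (Correctness of Rule 4) Let G be a bipartite graph in which every vertex has degree at least 2, and let v ∈ V_1(G) be adjacent to every vertex of V_2(G). Then G has a biclique edge cover of size k if and only if G − v has a biclique edge cover of size k. -/
section BicliqueCover

variable {α β : Type*} {E : α → β → Prop} {A : Set α} {B : Set β} {k : ℕ}

theorem IsBiclique.inter_setOf (P : α → Prop) (h : IsBiclique E A B) :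
    IsBiclique (fun a b => P a ∧ E a b) (A ∩ {a | P a}) B :=
  fun a ha b hb => ⟨ha.2, h a ha.1 b hb⟩

theorem IsBiclique.of_restrict {P : α → Prop} (h : IsBiclique (fun a b => P a ∧ E a b) A B) :
    IsBiclique E A B :=
  fun a ha b hb => (h a ha b hb).2

theorem IsBiclique.insert {v : α} (h : IsBiclique E A B) (hv : ∀ b ∈ B, E v b) :
    IsBiclique E (insert v A) B := by
  rintro a (rfl | ha) b hb
  · exact hv b hb
  · exact h a ha b hb

theorem HasBicCover.restrict_s8 (P : α → Prop) (h : HasBicCover E k) :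
    HasBicCover (fun a b => P a ∧ E a b) k := by
  obtain ⟨A, B, hbic, hcov⟩ := h
  refine ⟨fun ℓ => A ℓ ∩ {a | P a}, B, fun ℓ => (hbic ℓ).inter_setOf P, ?_⟩
  rintro a b ⟨hPa, hab⟩
  obtain ⟨ℓ, haA, hbB⟩ := hcov a b hab
  exact ⟨ℓ, ⟨haA, hPa⟩, hbB⟩

theorem HasBicCover.of_delete_of_forall_adj {v : α} (hdom : ∀ b, E v b)
    (hother : ∀ b, ∃ a, a ≠ v ∧ E a b) (h : HasBicCover (fun a b => a ≠ v ∧ E a b) k) :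
    HasBicCover E k := by
  obtain ⟨A, B, hbic, hcov⟩ := h
  refine ⟨fun ℓ => insert v (A ℓ), B, fun ℓ => (hbic ℓ).of_restrict.insert fun b _ => hdom b, ?_⟩
  intro a b hab
  by_cases hav : a = v
  · obtain ⟨a', ha'⟩ := hother b
    obtain ⟨ℓ, -, hbB⟩ := hcov a' b ha'
    exact ⟨ℓ, Or.inl hav, hbB⟩
  · obtain ⟨ℓ, haA, hbB⟩ := hcov a b ⟨hav, hab⟩
    exact ⟨ℓ, Or.inr haA, hbB⟩

end BicliqueCover

theorem exists_ne_and_of_two_adj {α β : Type*} {E : α → β → Prop} {b : β}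
    (h : ∃ a a' : α, a ≠ a' ∧ E a b ∧ E a' b) (v : α) : ∃ a, a ≠ v ∧ E a b := by
  obtain ⟨a, a', hne, ha, ha'⟩ := h
  rcases eq_or_ne a v with rfl | hav
  · exact ⟨a', hne.symm, ha'⟩
  · exact ⟨a, hav, ha⟩

theorem rule4_correct_general {α β : Type*} (E : α → β → Prop) (v : α)
    (hdeg2 : ∀ b : β, ∃ a a' : α, a ≠ a' ∧ E a b ∧ E a' b)
    (hdom : ∀ b : β, E v b) (k : ℕ) :
    HasBicCover E k ↔ HasBicCover (fun a b => a ≠ v ∧ E a b) k :=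
  ⟨HasBicCover.restrict_s8 (· ≠ v),
    HasBicCover.of_delete_of_forall_adj hdom fun b => exists_ne_and_of_two_adj (hdeg2 b) v⟩

/-- Correctness of Rule 4: if every vertex of `G` has degree at least `2` and
    `v ∈ V₁(G)` is adjacent to every vertex of `V₂(G)`, then `G` has a biclique edge
    cover of size `k` iff `G − v` does. -/
theorem rule4_correct {α β : Type*} (E : α → β → Prop) (v : α)
    (hdeg1 : ∀ a : α, ∃ b b' : β, b ≠ b' ∧ E a b ∧ E a b')
    (hdeg2 : ∀ b : β, ∃ a a' : α, a ≠ a' ∧ E a b ∧ E a' b)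
    (hdom : ∀ b : β, E v b) (k : ℕ) :
    HasBicCover E k ↔ HasBicCover (fun a b => a ≠ v ∧ E a b) k :=
  rule4_correct_general E v hdeg2 hdom k
end

section
/- If a bipartite graph G has no isolated vertices and no two vertices (in the same class) with identical neighborhoods, and G has a biclique edge cover of size k, then each bipartition class of G has at most 2^k vertices, and hence G has at most 2^{2k} edges. -/
def IsBicliqueCover {α β ι : Type*} (E : α → β → Prop) (A : ι → Set α) (B : ι → Set β) :
    Prop :=
  (∀ ℓ, IsBiclique E (A ℓ) (B ℓ)) ∧ ∀ a b, E a b → ∃ ℓ, a ∈ A ℓ ∧ b ∈ B ℓ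

namespace IsBicliqueCover

variable {α β ι : Type*} {E : α → β → Prop} {A : ι → Set α} {B : ι → Set β}

theorem adj_iff (h : IsBicliqueCover E A B) {a : α} {b : β} :
    E a b ↔ ∃ ℓ, a ∈ A ℓ ∧ b ∈ B ℓ :=
  ⟨h.2 a b, fun ⟨ℓ, ha, hb⟩ => h.1 ℓ a ha b hb⟩

theorem flip (h : IsBicliqueCover E A B) : IsBicliqueCover (flip E) B A :=
  ⟨fun ℓ b hb a ha => h.1 ℓ a ha b hb, fun b a hab => (h.2 a b hab).imp fun _ => And.symm⟩

/-- The neighbourhood of `a` is the union of the `B ℓ` over the bicliques containing `a`, so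
twin-free vertices are told apart by the bicliques they lie in. -/
theorem injective_setOf_mem (h : IsBicliqueCover E A B)
    (htwin : ∀ a a' : α, (∀ b, E a b ↔ E a' b) → a = a') :
    Function.Injective fun a => {ℓ | a ∈ A ℓ} := by
  intro a a' hmem
  refine htwin a a' fun b => ?_
  have hiff : ∀ ℓ, a ∈ A ℓ ↔ a' ∈ A ℓ := Set.ext_iff.mp hmem
  simp only [h.adj_iff, hiff]

theorem finite [Finite ι] (h : IsBicliqueCover E A B)
    (htwin : ∀ a a' : α, (∀ b, E a b ↔ E a' b) → a = a') : Finite α :=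
  Finite.of_injective _ (h.injective_setOf_mem htwin)

theorem card_le_two_pow [Fintype ι] (h : IsBicliqueCover E A B)
    (htwin : ∀ a a' : α, (∀ b, E a b ↔ E a' b) → a = a') :
    Nat.card α ≤ 2 ^ Fintype.card ι :=
  calc Nat.card α ≤ Nat.card (Set ι) :=
        Nat.card_le_card_of_injective _ (h.injective_setOf_mem htwin)
    _ = 2 ^ Fintype.card ι := by rw [Nat.card_eq_fintype_card, Fintype.card_set]

end IsBicliqueCover

theorem Nat.card_subtype_prod_le {α β : Type*} [Finite α] [Finite β] (E : α → β → Prop) :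
    Nat.card {p : α × β // E p.1 p.2} ≤ Nat.card α * Nat.card β :=
  Nat.card_prod α β ▸ Finite.card_subtype_le _

theorem kernel_size_bound_general {α β : Type*} (E : α → β → Prop)
    (htwin1 : ∀ a a' : α, (∀ b, E a b ↔ E a' b) → a = a')
    (htwin2 : ∀ b b' : β, (∀ a, E a b ↔ E a b') → b = b')
    (k : ℕ) (A : Fin k → Set α) (B : Fin k → Set β)
    (hbic : ∀ ℓ, IsBiclique E (A ℓ) (B ℓ))
    (hcov : ∀ a b, E a b → ∃ ℓ, a ∈ A ℓ ∧ b ∈ B ℓ) :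
    Nat.card α ≤ 2 ^ k ∧ Nat.card β ≤ 2 ^ k ∧
      Nat.card {p : α × β // E p.1 p.2} ≤ 2 ^ (2 * k) := by
  have hcover : IsBicliqueCover E A B := ⟨hbic, hcov⟩
  have hα : Nat.card α ≤ 2 ^ k := by simpa using hcover.card_le_two_pow htwin1
  have hβ : Nat.card β ≤ 2 ^ k := by simpa using hcover.flip.card_le_two_pow htwin2
  have := hcover.finite htwin1
  have := hcover.flip.finite htwin2
  refine ⟨hα, hβ, ?_⟩
  calc Nat.card {p : α × β // E p.1 p.2} ≤ Nat.card α * Nat.card β := Nat.card_subtype_prod_le E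
    _ ≤ 2 ^ k * 2 ^ k := Nat.mul_le_mul hα hβ
    _ = 2 ^ (2 * k) := by ring

/-- If a bipartite graph has no isolated vertices, no two vertices in the same class
    with identical neighborhoods, and a biclique edge cover of size `k`, then each class
    has at most `2^k` vertices and there are at most `2^(2k)` edges. -/
theorem kernel_size_bound {α β : Type*} [Finite α] [Finite β] (E : α → β → Prop)
    (hiso1 : ∀ a : α, ∃ b, E a b) (hiso2 : ∀ b : β, ∃ a, E a b)
    (htwin1 : ∀ a a' : α, (∀ b, E a b ↔ E a' b) → a = a')
    (htwin2 : ∀ b b' : β, (∀ a, E a b ↔ E a b') → b = b')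
    (k : ℕ) (A : Fin k → Set α) (B : Fin k → Set β)
    (hbic : ∀ ℓ, IsBiclique E (A ℓ) (B ℓ))
    (hcov : ∀ a b, E a b → ∃ ℓ, a ∈ A ℓ ∧ b ∈ B ℓ) :
    Nat.card α ≤ 2 ^ k ∧ Nat.card β ≤ 2 ^ k ∧
      Nat.card {p : α × β // E p.1 p.2} ≤ 2 ^ (2 * k) :=
  kernel_size_bound_general E htwin1 htwin2 k A B hbic hcov
end
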